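/- arXiv:2002.01010 — 3 statements merged into one kernel-verified Lean document; each statement's English description precedes it below -/
import Mathlib

section
/- Under the β=1 piecewise-constant variance-profile model with all entry laws having a sharp sub-Gaussian Laplace transform, for every N, every θ ≥ 0 and every unit vector e ∈ ℝ^N, one has E[exp(Nθ⟨e, X_N e⟩)] ≤ exp(Nθ² Σ_{k,l=1}^n σ_{kl}² ψ_k ψ_l), where ψ_k := Σ_{i ∈ I_k^{(N)}} e_i². -/
open MeasureTheory Filter
open scoped ENNReal ProbabilityTheory


private lemma split_le_sum {N : ℕ} (f : Fin N × Fin N → ℝ) :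
    ∑ q ∈ Finset.univ.filter (fun q : Fin N × Fin N => q.1 ≤ q.2), f q
      = ∑ q ∈ Finset.univ.filter (fun q : Fin N × Fin N => q.1 = q.2), f q
        + ∑ q ∈ Finset.univ.filter (fun q : Fin N × Fin N => q.1 < q.2), f q := by
  classical
  rw [← Finset.sum_filter_add_sum_filter_not
      (Finset.univ.filter (fun q : Fin N × Fin N => q.1 ≤ q.2))
      (fun q => q.1 = q.2) f, Finset.filter_filter, Finset.filter_filter]
  congr 1
  · apply Finset.sum_congr _ (fun _ _ => rfl)
    apply Finset.filter_congr
    intro q _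
    constructor
    · exact fun h => h.2
    · exact fun h => ⟨le_of_eq h, h⟩
  · apply Finset.sum_congr _ (fun _ _ => rfl)
    apply Finset.filter_congr
    intro q _
    constructor
    · exact fun h => lt_of_le_of_ne h.1 h.2
    · exact fun h => ⟨le_of_lt h, ne_of_lt h⟩

private lemma sym_pair_sum {N : ℕ} (g : Fin N → Fin N → ℝ) (hg : ∀ i j, g i j = g j i) :
    ∑ i, ∑ j, g i j
      = ∑ p : {p : Fin N × Fin N // p.1 ≤ p.2},
          (if (p : Fin N × Fin N).1 = (p : Fin N × Fin N).2 then (1 : ℝ) else 2)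
            * g (p : Fin N × Fin N).1 (p : Fin N × Fin N).2 := by
  classical
  have hsub : (∑ p : {p : Fin N × Fin N // p.1 ≤ p.2},
      (if (p : Fin N × Fin N).1 = (p : Fin N × Fin N).2 then (1 : ℝ) else 2)
        * g (p : Fin N × Fin N).1 (p : Fin N × Fin N).2)
      = ∑ q ∈ Finset.univ.filter (fun q : Fin N × Fin N => q.1 ≤ q.2),
          (if q.1 = q.2 then (1 : ℝ) else 2) * g q.1 q.2 :=
    (Finset.sum_subtype (Finset.univ.filter fun q : Fin N × Fin N => q.1 ≤ q.2)
      (fun q => by simp) (fun q => (if q.1 = q.2 then (1 : ℝ) else 2) * g q.1 q.2)).symm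
  rw [hsub]
  have hLHS : ∑ i, ∑ j, g i j = ∑ q ∈ (Finset.univ : Finset (Fin N × Fin N)), g q.1 q.2 := by
    rw [← Finset.sum_product']
    congr 1
  rw [hLHS, ← Finset.sum_filter_add_sum_filter_not (Finset.univ : Finset (Fin N × Fin N))
      (fun q => q.1 ≤ q.2) (fun q => g q.1 q.2)]
  have hswap : ∑ q ∈ Finset.univ.filter (fun q : Fin N × Fin N => ¬ q.1 ≤ q.2), g q.1 q.2
      = ∑ q ∈ Finset.univ.filter (fun q : Fin N × Fin N => q.1 < q.2), g q.1 q.2 := by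
    refine Finset.sum_nbij' (fun q => Prod.swap q) (fun q => Prod.swap q) ?_ ?_ ?_ ?_ ?_
    · intro q hq
      simp only [Finset.mem_filter, Finset.mem_univ, true_and, not_le] at hq ⊢
      exact hq
    · intro q hq
      simp only [Finset.mem_filter, Finset.mem_univ, true_and, not_le] at hq ⊢
      exact hq
    · intro q _; rfl
    · intro q _; rfl
    · intro q _
      exact hg q.1 q.2
  rw [hswap, split_le_sum (fun q => g q.1 q.2),
      split_le_sum (fun q => (if q.1 = q.2 then (1 : ℝ) else 2) * g q.1 q.2)]
  have h1 : ∑ q ∈ Finset.univ.filter (fun q : Fin N × Fin N => q.1 = q.2),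
      (if q.1 = q.2 then (1 : ℝ) else 2) * g q.1 q.2
      = ∑ q ∈ Finset.univ.filter (fun q : Fin N × Fin N => q.1 = q.2), g q.1 q.2 := by
    refine Finset.sum_congr rfl fun q hq => ?_
    simp only [Finset.mem_filter] at hq
    rw [if_pos hq.2, one_mul]
  have h2 : ∑ q ∈ Finset.univ.filter (fun q : Fin N × Fin N => q.1 < q.2),
      (if q.1 = q.2 then (1 : ℝ) else 2) * g q.1 q.2
      = ∑ q ∈ Finset.univ.filter (fun q : Fin N × Fin N => q.1 < q.2),
          (g q.1 q.2 + g q.1 q.2) := by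
    refine Finset.sum_congr rfl fun q hq => ?_
    simp only [Finset.mem_filter] at hq
    rw [if_neg (ne_of_lt hq.2)]
    ring
  rw [h1, h2, Finset.sum_add_distrib]
  ring

private lemma fiber_sum {N n : ℕ} (κ : Fin N → Fin n) (F : Fin n → Fin n → ℝ)
    (u : Fin N → ℝ) :
    ∑ i, ∑ j, F (κ i) (κ j) * u i * u j
      = ∑ k, ∑ l, F k l * (∑ i ∈ Finset.univ.filter (fun i => κ i = k), u i) *
          (∑ j ∈ Finset.univ.filter (fun j => κ j = l), u j) := by
  classical
  have step1 : ∀ i : Fin N, ∑ j, F (κ i) (κ j) * u i * u j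
      = ∑ l, F (κ i) l * u i * (∑ j ∈ Finset.univ.filter (fun j => κ j = l), u j) := by
    intro i
    rw [← Finset.sum_fiberwise Finset.univ κ (fun j => F (κ i) (κ j) * u i * u j)]
    refine Finset.sum_congr rfl fun l _ => ?_
    rw [Finset.mul_sum]
    refine Finset.sum_congr rfl fun j hj => ?_
    simp only [Finset.mem_filter] at hj
    rw [hj.2]
  calc ∑ i, ∑ j, F (κ i) (κ j) * u i * u j
      = ∑ i, ∑ l, F (κ i) l * u i * (∑ j ∈ Finset.univ.filter (fun j => κ j = l), u j) :=
        Finset.sum_congr rfl fun i _ => step1 i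
    _ = ∑ k, ∑ i ∈ Finset.univ.filter (fun i => κ i = k),
          ∑ l, F (κ i) l * u i * (∑ j ∈ Finset.univ.filter (fun j => κ j = l), u j) :=
        (Finset.sum_fiberwise Finset.univ κ _).symm
    _ = ∑ k, ∑ l, F k l * (∑ i ∈ Finset.univ.filter (fun i => κ i = k), u i) *
          (∑ j ∈ Finset.univ.filter (fun j => κ j = l), u j) := by
        refine Finset.sum_congr rfl fun k _ => ?_
        rw [Finset.sum_comm]
        refine Finset.sum_congr rfl fun l _ => ?_
        have : ∑ x ∈ Finset.univ.filter (fun i => κ i = k),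
            F (κ x) l * u x * (∑ j ∈ Finset.univ.filter (fun j => κ j = l), u j)
            = ∑ x ∈ Finset.univ.filter (fun i => κ i = k),
              F k l * u x * (∑ j ∈ Finset.univ.filter (fun j => κ j = l), u j) := by
          refine Finset.sum_congr rfl fun x hx => ?_
          simp only [Finset.mem_filter] at hx
          rw [hx.2]
        rw [this, ← Finset.sum_mul, ← Finset.mul_sum]

/-- Under the `β = 1` piecewise-constant variance-profile model with all
entry laws having sharp sub-Gaussian Laplace transforms, for every `N`, every `θ ≥ 0` and
every unit vector `e ∈ ℝᴺ`,
`E[exp (N θ ⟨e, X_N e⟩)] ≤ exp (N θ² Σ_{k,l} σ_{kl}² ψ_k ψ_l)`,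
where `ψ_k = Σ_{i ∈ I_k^{(N)}} e_i²` (the blocks are encoded by the monotone block map
`κ N : Fin N → Fin n`). -/
theorem annealed_quadratic_form_bound
    (n : ℕ) (σ : Matrix (Fin n) (Fin n) ℝ) (hσsymm : σ.IsSymm)
    (hσnn : ∀ k l, 0 ≤ σ k l)
    (α : Fin n → ℝ) (hαpos : ∀ k, 0 < α k) (hαlt : ∀ k, α k < 1)
    (hαsum : ∑ k, α k = 1)
    (κ : (N : ℕ) → Fin N → Fin n) (hκmono : ∀ N, Monotone (κ N))
    (hκsize : ∀ k : Fin n,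
      Tendsto (fun N : ℕ =>
          ((Finset.univ.filter (fun i : Fin N => κ N i = k)).card : ℝ) / (N : ℝ))
        atTop (nhds (α k)))
    (Ω : Type) [MeasureSpace Ω] [IsProbabilityMeasure (ℙ : Measure Ω)]
    (a : (N : ℕ) → Fin N → Fin N → Ω → ℝ)
    (hmeas : ∀ N i j, Measurable (a N i j))
    (hindep : ∀ N, ProbabilityTheory.iIndepFun
      (fun p : {p : Fin N × Fin N // p.1 ≤ p.2} => a N p.1.1 p.1.2) ℙ)
    (hcent : ∀ N, ∀ i j : Fin N, i ≤ j → ∫ ω, a N i j ω = 0)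
    (hvar_off : ∀ N, ∀ i j : Fin N, i < j → ∫ ω, (a N i j ω) ^ 2 = 1)
    (hvar_diag : ∀ N, ∀ i : Fin N, ∫ ω, (a N i i ω) ^ 2 = 2)
    (hsubg : ∀ N, ∀ i j : Fin N, i ≤ j → ∀ t : ℝ,
      ∫ ω, Real.exp (t * a N i j ω) ≤ Real.exp (t ^ 2 * (∫ ω, (a N i j ω) ^ 2) / 2))
    (X : (N : ℕ) → Ω → Matrix (Fin N) (Fin N) ℝ)
    (hX : ∀ N ω i j, X N ω i j =
      σ (κ N i) (κ N j) * a N (min i j) (max i j) ω / Real.sqrt N) :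
    ∀ N : ℕ, ∀ θ : ℝ, 0 ≤ θ → ∀ e : Fin N → ℝ, (∑ i, e i ^ 2) = 1 →
      ∫ ω, Real.exp ((N : ℝ) * θ * ∑ i, e i * (X N ω).mulVec e i)
        ≤ Real.exp ((N : ℝ) * θ ^ 2 * ∑ k, ∑ l, σ k l ^ 2 *
            (∑ i ∈ Finset.univ.filter (fun i : Fin N => κ N i = k), e i ^ 2) *
            (∑ i ∈ Finset.univ.filter (fun i : Fin N => κ N i = l), e i ^ 2)) := by
  classical
  intro N θ hθ e he
  have hN : 0 < N := by
    rcases Nat.eq_zero_or_pos N with h | h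
    · exfalso; subst h; simpa using he
    · exact h
  have hNR : (0 : ℝ) < N := by exact_mod_cast hN
  have hsN : (0 : ℝ) < Real.sqrt N := Real.sqrt_pos.mpr hNR
  set C : ℝ := (N : ℝ) * θ / Real.sqrt N with hCdef
  have hC2 : C ^ 2 = (N : ℝ) * θ ^ 2 := by
    rw [hCdef, div_pow, Real.sq_sqrt hNR.le]
    field_simp
  set t : {p : Fin N × Fin N // p.1 ≤ p.2} → ℝ := fun p =>
    C * σ (κ N (p : Fin N × Fin N).1) (κ N (p : Fin N × Fin N).2) * e (p : Fin N × Fin N).1 *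
      e (p : Fin N × Fin N).2 * (if (p : Fin N × Fin N).1 = (p : Fin N × Fin N).2 then 1 else 2)
    with htdef
  set Y : {p : Fin N × Fin N // p.1 ≤ p.2} → Ω → ℝ := fun p ω =>
    t p * a N (p : Fin N × Fin N).1 (p : Fin N × Fin N).2 ω with hYdef
  -- pointwise identity
  have hpt : ∀ ω, (N : ℝ) * θ * ∑ i, e i * (X N ω).mulVec e i
      = ∑ p : {p : Fin N × Fin N // p.1 ≤ p.2}, Y p ω := by
    intro ω
    have h1 : (N : ℝ) * θ * ∑ i, e i * (X N ω).mulVec e i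
        = ∑ i, ∑ j, C * σ (κ N i) (κ N j) * e i * e j * a N (min i j) (max i j) ω := by
      simp only [Matrix.mulVec, dotProduct, Finset.mul_sum]
      refine Finset.sum_congr rfl fun i _ => ?_
      refine Finset.sum_congr rfl fun j _ => ?_
      rw [hX N ω i j, hCdef]
      field_simp
    rw [h1, sym_pair_sum (fun i j => C * σ (κ N i) (κ N j) * e i * e j * a N (min i j) (max i j) ω)
      (fun i j => by
        rw [min_comm, max_comm, hσsymm.apply]
        ring)]
    refine Finset.sum_congr rfl fun p _ => ?_
    have hmin : min (p : Fin N × Fin N).1 (p : Fin N × Fin N).2 = (p : Fin N × Fin N).1 :=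
      min_eq_left p.2
    have hmax : max (p : Fin N × Fin N).1 (p : Fin N × Fin N).2 = (p : Fin N × Fin N).2 :=
      max_eq_right p.2
    rw [hYdef, htdef]
    simp only [hmin, hmax]
    ring
  -- rewrite as mgf
  have hmgf : ∫ ω, Real.exp ((N : ℝ) * θ * ∑ i, e i * (X N ω).mulVec e i)
      = ProbabilityTheory.mgf (∑ p : {p : Fin N × Fin N // p.1 ≤ p.2}, Y p) ℙ 1 := by
    unfold ProbabilityTheory.mgf
    refine integral_congr_ae (Filter.Eventually.of_forall fun ω => ?_)
    simp only [one_mul, Finset.sum_apply]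
    rw [hpt ω]
  have hYindep : ProbabilityTheory.iIndepFun Y ℙ := by
    have := (hindep N).comp (fun p x => t p * x) (fun p => measurable_const_mul (t p))
    exact this
  have hYmeas : ∀ p : {p : Fin N × Fin N // p.1 ≤ p.2}, Measurable (Y p) :=
    fun p => (hmeas N _ _).const_mul (t p)
  have hprod := hYindep.mgf_sum hYmeas Finset.univ (t := 1)
  -- bound each factor
  have hfac : ∀ p : {p : Fin N × Fin N // p.1 ≤ p.2},
      ProbabilityTheory.mgf (Y p) ℙ 1
        ≤ Real.exp (t p ^ 2 *
            (if (p : Fin N × Fin N).1 = (p : Fin N × Fin N).2 then (2 : ℝ) else 1) / 2) := by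
    intro p
    have hv : ∫ ω, (a N (p : Fin N × Fin N).1 (p : Fin N × Fin N).2 ω) ^ 2
        = (if (p : Fin N × Fin N).1 = (p : Fin N × Fin N).2 then (2 : ℝ) else 1) := by
      rcases lt_or_eq_of_le p.2 with h | h
      · rw [if_neg (ne_of_lt h)]
        exact hvar_off N _ _ h
      · rw [if_pos h, h]
        exact hvar_diag N _
    have := hsubg N (p : Fin N × Fin N).1 (p : Fin N × Fin N).2 p.2 (t p)
    rw [hv] at this
    have hmgfp : ProbabilityTheory.mgf (Y p) ℙ 1
        = ∫ ω, Real.exp (t p * a N (p : Fin N × Fin N).1 (p : Fin N × Fin N).2 ω) := by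
      unfold ProbabilityTheory.mgf
      simp only [hYdef, one_mul]
    rw [hmgfp]
    exact this
  -- final exponent computation
  have hexp : ∑ p : {p : Fin N × Fin N // p.1 ≤ p.2}, t p ^ 2 *
        (if (p : Fin N × Fin N).1 = (p : Fin N × Fin N).2 then (2 : ℝ) else 1) / 2
      = (N : ℝ) * θ ^ 2 * ∑ k, ∑ l, σ k l ^ 2 *
          (∑ i ∈ Finset.univ.filter (fun i : Fin N => κ N i = k), e i ^ 2) *
          (∑ i ∈ Finset.univ.filter (fun i : Fin N => κ N i = l), e i ^ 2) := by
    have hterm : ∀ p : {p : Fin N × Fin N // p.1 ≤ p.2},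
        t p ^ 2 * (if (p : Fin N × Fin N).1 = (p : Fin N × Fin N).2 then (2 : ℝ) else 1) / 2
        = (if (p : Fin N × Fin N).1 = (p : Fin N × Fin N).2 then (1 : ℝ) else 2) *
            ((N : ℝ) * θ ^ 2 * (σ (κ N (p : Fin N × Fin N).1) (κ N (p : Fin N × Fin N).2) ^ 2
              * e (p : Fin N × Fin N).1 ^ 2 * e (p : Fin N × Fin N).2 ^ 2)) := by
      intro p
      rw [htdef]
      rcases eq_or_ne (p : Fin N × Fin N).1 (p : Fin N × Fin N).2 with h | h
      · simp only [if_pos h]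
        linear_combination (σ (κ N (p : Fin N × Fin N).1) (κ N (p : Fin N × Fin N).2) ^ 2
          * e (p : Fin N × Fin N).1 ^ 2 * e (p : Fin N × Fin N).2 ^ 2) * hC2
      · simp only [if_neg h]
        linear_combination (2 * σ (κ N (p : Fin N × Fin N).1) (κ N (p : Fin N × Fin N).2) ^ 2
          * e (p : Fin N × Fin N).1 ^ 2 * e (p : Fin N × Fin N).2 ^ 2) * hC2
    rw [Finset.sum_congr rfl fun p _ => hterm p]
    rw [← sym_pair_sum (fun i j => (N : ℝ) * θ ^ 2 *
        (σ (κ N i) (κ N j) ^ 2 * e i ^ 2 * e j ^ 2))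
      (fun i j => by rw [hσsymm.apply]; ring)]
    have := fiber_sum (κ N) (fun k l => σ k l ^ 2) (fun i => e i ^ 2)
    calc ∑ i, ∑ j, (N : ℝ) * θ ^ 2 * (σ (κ N i) (κ N j) ^ 2 * e i ^ 2 * e j ^ 2)
        = (N : ℝ) * θ ^ 2 * ∑ i, ∑ j, σ (κ N i) (κ N j) ^ 2 * e i ^ 2 * e j ^ 2 := by
          rw [Finset.mul_sum]
          refine Finset.sum_congr rfl fun i _ => ?_
          rw [Finset.mul_sum]
      _ = _ := by rw [this]
  -- put everything together
  rw [hmgf, hprod, ← hexp, Real.exp_sum]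
  exact Finset.prod_le_prod (fun p _ => ProbabilityTheory.mgf_nonneg)
    (fun p _ => hfac p)
end

section
/- Let n ≥ 1 and let (a_N)_{N≥0} = (a_{1,N},…,a_{n,N}) be a sequence of vectors of positive reals with lim_{N→∞} a_N/N = (α_1,…,α_n) where α_i > 0 for every i. Let Z_N := ∫_{D̃} x_1^{a_{1,N}−1}⋯x_{n−1}^{a_{n−1,N}−1}(1−x_1−⋯−x_{n−1})^{a_{n,N}−1} dx_1⋯dx_{n−1}, where D̃ = {x ∈ ℝ^{n−1} : x_i > 0, x_1+⋯+x_{n−1} < 1}. Then lim_{N→∞} (1/N) log Z_N = max over y ∈ ℝ^n with y_i > 0 and Σy_i = 1 of Σ_{i=1}^n α_i log y_i. In particular, if Σα_i = 1 this limit equals Σ_{i=1}^n α_i log α_i. -/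
/-!
Write `β = a - 1` and lift `x ∈ D̃` to the point `z = (x, 1 - ∑ xᵢ)` of the simplex, so that
the integrand is `∏ zᵢ ^ βᵢ = exp (∑ βᵢ log zᵢ)`. By Gibbs' inequality the exponent is at most
`M(β) = ∑ βᵢ log (βᵢ / ∑ β)`, the maximum of `∑ βᵢ log yᵢ` over the simplex, and `D̃` has
volume at most one, so `log Z ≤ M(β)`. Conversely, on the cube of side `ε` lying below the
maximizer `y = α / ∑ α` in the first `n - 1` coordinates, the integrand is at least its value
`∏ ẑᵢ ^ βᵢ` at the corner `ẑ = (y₁ - ε, …, y_{n-1} - ε, yₙ)`, so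
`log Z ≥ (n - 1) log ε + ∑ βᵢ log ẑᵢ`. With `β = a_N - 1`, `ε = 1 / N` and
`M(β / N) = M(β) / N`, both bounds divided by `N` tend to `M(α)`.
-/

open MeasureTheory Filter

noncomputable section

/-- The Dirichlet normalizing integral
`Z = ∫_{D̃} x₁^{a₁−1} ⋯ x_{n−1}^{a_{n−1}−1} (1 − x₁ − ⋯ − x_{n−1})^{aₙ−1} dx`
over `D̃ = {x ∈ ℝ^{n−1} : xᵢ > 0, Σ xᵢ < 1}`, with `n = m + 1`. -/
def dirichletZ (m : ℕ) (a : Fin (m + 1) → ℝ) : ℝ :=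
  ∫ x : Fin m → ℝ in {x | (∀ i, 0 < x i) ∧ ∑ i, x i < 1},
    (∏ i : Fin m, x i ^ (a i.castSucc - 1)) * (1 - ∑ i, x i) ^ (a (Fin.last m) - 1)

open Real Topology

section MaxWeightedLog

variable {ι : Type*} [Fintype ι]

def maxWeightedLog (β : ι → ℝ) : ℝ :=
  ∑ i, β i * log (β i / ∑ j, β j)

theorem sum_mul_log_le_maxWeightedLog {β x : ι → ℝ} (hβ : ∀ i, 0 ≤ β i) (hx : ∀ i, 0 < x i)
    (hx1 : ∑ i, x i ≤ 1) : ∑ i, β i * log (x i) ≤ maxWeightedLog β := by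
  set B := ∑ j, β j
  have hB : 0 ≤ B := Finset.sum_nonneg fun i _ => hβ i
  -- `log t ≤ t - 1` at `t = B xᵢ / βᵢ`
  have key : ∀ i, β i * log (x i) - β i * log (β i / B) ≤ B * x i - β i := by
    intro i
    obtain hβi | hβi := (hβ i).eq_or_lt
    · simpa [← hβi] using mul_nonneg hB (hx i).le
    have hBpos : 0 < B :=
      hβi.trans_le (Finset.single_le_sum (fun j _ => hβ j) (Finset.mem_univ i))
    calc β i * log (x i) - β i * log (β i / B) = β i * log (B * x i / β i) := by
          rw [log_div (mul_pos hBpos (hx i)).ne' hβi.ne', log_mul hBpos.ne' (hx i).ne',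
            log_div hβi.ne' hBpos.ne']
          ring
      _ ≤ β i * (B * x i / β i - 1) := mul_le_mul_of_nonneg_left
          (log_le_sub_one_of_pos (div_pos (mul_pos hBpos (hx i)) hβi)) hβi.le
      _ = B * x i - β i := by field_simp
  have hsum := Finset.sum_le_sum fun i (_ : i ∈ Finset.univ) => key i
  simp only [Finset.sum_sub_distrib, ← Finset.mul_sum] at hsum
  have := mul_le_mul_of_nonneg_left hx1 hB
  unfold maxWeightedLog
  linarith

theorem isGreatest_maxWeightedLog [Nonempty ι] {β : ι → ℝ} (hβ : ∀ i, 0 < β i) :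
    IsGreatest {r | ∃ y : ι → ℝ, (∀ i, 0 < y i) ∧ ∑ i, y i = 1 ∧ r = ∑ i, β i * log (y i)}
      (maxWeightedLog β) := by
  have hB : 0 < ∑ j, β j := Finset.sum_pos (fun i _ => hβ i) Finset.univ_nonempty
  refine ⟨⟨fun i => β i / ∑ j, β j, fun i => div_pos (hβ i) hB, ?_, rfl⟩, ?_⟩
  · rw [← Finset.sum_div, div_self hB.ne']
  · rintro r ⟨y, hy, hy1, rfl⟩
    exact sum_mul_log_le_maxWeightedLog (fun i => (hβ i).le) hy hy1.le

theorem maxWeightedLog_div_const (β : ι → ℝ) (c : ℝ) :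
    maxWeightedLog (fun i => β i / c) = maxWeightedLog β / c := by
  obtain rfl | hc := eq_or_ne c 0
  · simp [maxWeightedLog]
  simp only [maxWeightedLog, ← Finset.sum_div, div_div_div_cancel_right₀ hc, div_mul_eq_mul_div]

theorem continuousAt_maxWeightedLog {β : ι → ℝ} (hβ : ∀ i, β i ≠ 0) (hB : ∑ i, β i ≠ 0) :
    ContinuousAt maxWeightedLog β := by
  have hsum : Continuous fun β : ι → ℝ => ∑ j, β j := by fun_prop
  refine tendsto_finsetSum _ fun i _ => ?_
  have hi := (continuous_apply i).continuousAt (x := β)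
  exact hi.mul ((hi.div hsum.continuousAt hB).log (div_ne_zero (hβ i) hB))

end MaxWeightedLog

section DirichletIntegral

variable {m : ℕ} {x : Fin m → ℝ}

def dirichletDomain (m : ℕ) : Set (Fin m → ℝ) := {x | (∀ i, 0 < x i) ∧ ∑ i, x i < 1}

def simplexLift (x : Fin m → ℝ) : Fin (m + 1) → ℝ := Fin.snoc x (1 - ∑ i, x i)

theorem sum_simplexLift (x : Fin m → ℝ) : ∑ i, simplexLift x i = 1 := by
  simp [simplexLift, Fin.sum_univ_castSucc]

theorem simplexLift_pos (hx : x ∈ dirichletDomain m) (i : Fin (m + 1)) :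
    0 < simplexLift x i := by
  induction i using Fin.lastCases with
  | last => simpa [simplexLift] using hx.2
  | cast i => simpa [simplexLift] using hx.1 i

theorem continuous_simplexLift : Continuous (simplexLift (m := m)) := by
  unfold simplexLift
  fun_prop

theorem isOpen_dirichletDomain : IsOpen (dirichletDomain m) := by
  simp only [dirichletDomain, Set.ofPred_and, Set.ofPred_forall]
  exact (isOpen_iInter_of_finite fun i => isOpen_lt continuous_const (continuous_apply i)).inter
    (isOpen_lt (by fun_prop) continuous_const)

theorem volume_dirichletDomain_le_one : volume (dirichletDomain m) ≤ 1 := by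
  have hsub : dirichletDomain m ⊆ Set.univ.pi fun _ => Set.Ioo 0 1 := fun x hx i _ =>
    ⟨hx.1 i, (Finset.single_le_sum (fun j _ => (hx.1 j).le) (Finset.mem_univ i)).trans_lt hx.2⟩
  simpa [volume_pi_pi] using measure_mono (μ := volume) hsub

def dirichletIntegrand (a : Fin (m + 1) → ℝ) (x : Fin m → ℝ) : ℝ :=
  ∏ i, simplexLift x i ^ (a i - 1)

theorem dirichletZ_eq_setIntegral (m : ℕ) (a : Fin (m + 1) → ℝ) :
    dirichletZ m a = ∫ x in dirichletDomain m, dirichletIntegrand a x := by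
  simp [dirichletZ, dirichletDomain, dirichletIntegrand, simplexLift, Fin.prod_univ_castSucc]

variable {a : Fin (m + 1) → ℝ}

theorem dirichletIntegrand_nonneg (hx : x ∈ dirichletDomain m) : 0 ≤ dirichletIntegrand a x :=
  Finset.prod_nonneg fun i _ => rpow_nonneg (simplexLift_pos hx i).le _

theorem dirichletIntegrand_le_one (ha : ∀ i, 1 ≤ a i) (hx : x ∈ dirichletDomain m) :
    dirichletIntegrand a x ≤ 1 := by
  have hle : ∀ i, simplexLift x i ≤ 1 := fun i => sum_simplexLift x ▸
    Finset.single_le_sum (fun j _ => (simplexLift_pos hx j).le) (Finset.mem_univ i)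
  exact Finset.prod_le_one (fun i _ => rpow_nonneg (simplexLift_pos hx i).le _) fun i _ =>
    rpow_le_one (simplexLift_pos hx i).le (hle i) (sub_nonneg.2 (ha i))

theorem dirichletIntegrand_le_exp_maxWeightedLog (ha : ∀ i, 1 ≤ a i)
    (hx : x ∈ dirichletDomain m) :
    dirichletIntegrand a x ≤ exp (maxWeightedLog fun i => a i - 1) := by
  have hpos := simplexLift_pos hx
  simp only [dirichletIntegrand, rpow_def_of_pos (hpos _), ← exp_sum, exp_le_exp,
    mul_comm (log _)]
  exact sum_mul_log_le_maxWeightedLog (fun i => sub_nonneg.2 (ha i)) hpos (sum_simplexLift x).le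

theorem integrableOn_dirichletIntegrand (ha : ∀ i, 1 ≤ a i) :
    IntegrableOn (dirichletIntegrand a) (dirichletDomain m) := by
  refine Measure.integrableOn_of_bounded (M := 1)
    (volume_dirichletDomain_le_one.trans_lt ENNReal.one_lt_top).ne
    (Finset.measurable_prod _ fun i _ => ((continuous_apply i).comp
      continuous_simplexLift).measurable.pow_const _).aestronglyMeasurable ?_
  rw [ae_restrict_iff' isOpen_dirichletDomain.measurableSet]
  exact ae_of_all _ fun x hx => by
    rw [Real.norm_of_nonneg (dirichletIntegrand_nonneg hx)]
    exact dirichletIntegrand_le_one ha hx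

theorem dirichletZ_le_exp_maxWeightedLog (ha : ∀ i, 1 ≤ a i) :
    dirichletZ m a ≤ exp (maxWeightedLog fun i => a i - 1) := by
  set M := maxWeightedLog fun i => a i - 1
  have hvol : volume.real (dirichletDomain m) ≤ 1 := by
    simpa [Measure.real] using
      ENNReal.toReal_mono ENNReal.one_ne_top volume_dirichletDomain_le_one
  calc dirichletZ m a ≤ ‖dirichletZ m a‖ := le_norm_self _
    _ ≤ exp M * volume.real (dirichletDomain m) := by
      rw [dirichletZ_eq_setIntegral]
      refine norm_setIntegral_le_of_norm_le_const
        (volume_dirichletDomain_le_one.trans_lt ENNReal.one_lt_top) fun x hx => ?_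
      rw [Real.norm_of_nonneg (dirichletIntegrand_nonneg hx)]
      exact dirichletIntegrand_le_exp_maxWeightedLog ha hx
    _ ≤ exp M := mul_le_of_le_one_right (exp_pos M).le hvol

def lowerCorner (y : Fin (m + 1) → ℝ) (ε : ℝ) : Fin (m + 1) → ℝ :=
  Fin.snoc (fun i => y i.castSucc - ε) (y (Fin.last m))

variable {y : Fin (m + 1) → ℝ} {ε : ℝ}

theorem lowerCorner_pos (hy : 0 < y (Fin.last m)) (hεy : ∀ i : Fin m, ε < y i.castSucc)
    (i : Fin (m + 1)) : 0 < lowerCorner y ε i := by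
  induction i using Fin.lastCases with
  | last => simpa [lowerCorner] using hy
  | cast i => simpa [lowerCorner] using hεy i

theorem lowerCorner_le_simplexLift (hy1 : ∑ i, y i ≤ 1)
    (hx : x ∈ Set.univ.pi fun i => Set.Ioo (y i.castSucc - ε) (y i.castSucc)) :
    lowerCorner y ε ≤ simplexLift x := by
  intro i
  have hsum : ∑ j, x j ≤ ∑ j : Fin m, y j.castSucc :=
    Finset.sum_le_sum fun j _ => (hx j trivial).2.le
  rw [Fin.sum_univ_castSucc] at hy1
  induction i using Fin.lastCases with
  | last => simp only [lowerCorner, simplexLift, Fin.snoc_last]; linarith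
  | cast i => simpa [lowerCorner, simplexLift] using (hx i trivial).1.le

theorem prod_lowerCorner_rpow_pos (hy : 0 < y (Fin.last m))
    (hεy : ∀ i : Fin m, ε < y i.castSucc) : 0 < ∏ i, lowerCorner y ε i ^ (a i - 1) :=
  Finset.prod_pos fun i _ => rpow_pos_of_pos (lowerCorner_pos hy hεy i) _

theorem pi_Ioo_subset_dirichletDomain (hy : 0 < y (Fin.last m)) (hy1 : ∑ i, y i ≤ 1)
    (hεy : ∀ i : Fin m, ε < y i.castSucc) :
    (Set.univ.pi fun i => Set.Ioo (y i.castSucc - ε) (y i.castSucc)) ⊆ dirichletDomain m := by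
  intro x hx
  have hsum : ∑ j, x j ≤ ∑ j : Fin m, y j.castSucc :=
    Finset.sum_le_sum fun j _ => (hx j trivial).2.le
  rw [Fin.sum_univ_castSucc] at hy1
  exact ⟨fun i => by linarith [hεy i, (hx i trivial).1], by linarith⟩

theorem le_dirichletZ (ha : ∀ i, 1 ≤ a i) (hy : 0 < y (Fin.last m)) (hy1 : ∑ i, y i ≤ 1)
    (hε : 0 < ε) (hεy : ∀ i : Fin m, ε < y i.castSucc) :
    ε ^ m * ∏ i, lowerCorner y ε i ^ (a i - 1) ≤ dirichletZ m a := by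
  set C := Set.univ.pi fun i : Fin m => Set.Ioo (y i.castSucc - ε) (y i.castSucc)
  have hC : MeasurableSet C := .univ_pi fun _ => measurableSet_Ioo
  have hvol : volume.real C = ε ^ m := by
    simp [C, Measure.real, volume_pi_pi, Real.volume_Ioo, hε.le]
  have hpos := lowerCorner_pos hy hεy
  have hle : ∀ x ∈ C, ∏ i, lowerCorner y ε i ^ (a i - 1) ≤ dirichletIntegrand a x :=
    fun x hx => Finset.prod_le_prod (fun i _ => (rpow_pos_of_pos (hpos i) _).le) fun i _ =>
      rpow_le_rpow (hpos i).le (lowerCorner_le_simplexLift hy1 hx i) (sub_nonneg.2 (ha i))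
  have hint := integrableOn_dirichletIntegrand ha
  have hnn : 0 ≤ᵐ[volume.restrict (dirichletDomain m)] dirichletIntegrand a :=
    (ae_restrict_iff' isOpen_dirichletDomain.measurableSet).2 <|
      ae_of_all _ fun _ => dirichletIntegrand_nonneg
  rw [dirichletZ_eq_setIntegral, mul_comm, ← hvol]
  calc _ ≤ ∫ x in C, dirichletIntegrand a x :=
        setIntegral_ge_of_const_le_real hC (by simp [C, volume_pi_pi]) hle
          (hint.mono_set (pi_Ioo_subset_dirichletDomain hy hy1 hεy))
    _ ≤ _ :=
        setIntegral_mono_set hint hnn (pi_Ioo_subset_dirichletDomain hy hy1 hεy).eventuallyLE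

theorem le_log_dirichletZ (ha : ∀ i, 1 ≤ a i) (hy : 0 < y (Fin.last m)) (hy1 : ∑ i, y i ≤ 1)
    (hε : 0 < ε) (hεy : ∀ i : Fin m, ε < y i.castSucc) :
    m * log ε + ∑ i, (a i - 1) * log (lowerCorner y ε i) ≤ log (dirichletZ m a) := by
  have hpos := lowerCorner_pos hy hεy
  have hprod := prod_lowerCorner_rpow_pos (a := a) hy hεy
  have h := log_le_log (by positivity) (le_dirichletZ ha hy hy1 hε hεy)
  rw [log_mul (by positivity) hprod.ne', log_pow,
    log_prod fun i _ => (rpow_pos_of_pos (hpos i) _).ne'] at h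
  simpa only [log_rpow (hpos _)] using h

theorem dirichletZ_pos (ha : ∀ i, 1 ≤ a i) : 0 < dirichletZ m a := by
  have hm : (0 : ℝ) < m + 1 := by positivity
  set y : Fin (m + 1) → ℝ := fun _ => 1 / (m + 1)
  have hy : 0 < y (Fin.last m) := by positivity
  have hy1 : ∑ i, y i ≤ 1 := by simp [y, mul_inv_cancel₀ hm.ne']
  have hεy : ∀ i : Fin m, 1 / (2 * (m + 1)) < y i.castSucc := fun _ =>
    one_div_lt_one_div_of_lt hm (by linarith)
  exact lt_of_lt_of_le (mul_pos (by positivity) (prod_lowerCorner_rpow_pos hy hεy))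
    (le_dirichletZ ha hy hy1 (by positivity) hεy)

theorem log_dirichletZ_le (ha : ∀ i, 1 ≤ a i) :
    log (dirichletZ m a) ≤ maxWeightedLog fun i => a i - 1 :=
  (log_le_iff_le_exp (dirichletZ_pos ha)).2 (dirichletZ_le_exp_maxWeightedLog ha)

end DirichletIntegral

section Asymptotics

variable {m : ℕ}

theorem tendsto_lowerCorner (y : Fin (m + 1) → ℝ) : Tendsto (lowerCorner y) (𝓝 0) (𝓝 y) := by
  have h : Continuous (lowerCorner y) := by unfold lowerCorner; fun_prop
  simpa [lowerCorner, ← Fin.init_def, Fin.snoc_init_self] using h.tendsto 0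

theorem tendsto_lowerBound_div_atTop {a : ℕ → Fin (m + 1) → ℝ} {α y : Fin (m + 1) → ℝ}
    (hy : ∀ i, 0 < y i) (hβ : ∀ i, Tendsto (fun N : ℕ => (a N i - 1) / N) atTop (𝓝 (α i))) :
    Tendsto (fun N : ℕ =>
        (m * log (N : ℝ)⁻¹ + ∑ i, (a N i - 1) * log (lowerCorner y (N : ℝ)⁻¹ i)) / N)
      atTop (𝓝 (∑ i, α i * log (y i))) := by
  have hlog : Tendsto (fun N : ℕ => log N / N) atTop (𝓝 0) := by
    simpa [Function.comp_def] using (tendsto_pow_log_div_mul_add_atTop 1 0 1 one_ne_zero).comp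
      tendsto_natCast_atTop_atTop
  have hsum : Tendsto (fun N : ℕ => ∑ i, (a N i - 1) / N * log (lowerCorner y (N : ℝ)⁻¹ i))
      atTop (𝓝 (∑ i, α i * log (y i))) :=
    tendsto_finsetSum _ fun i _ => (hβ i).mul <| (continuousAt_log (hy i).ne').tendsto.comp <|
      (tendsto_pi_nhds.1 ((tendsto_lowerCorner y).comp tendsto_inv_atTop_nhds_zero_nat)) i
  convert (hlog.const_mul (-(m : ℝ))).add hsum using 2 with N
  · simp only [log_inv, add_div, Finset.sum_div, mul_div_right_comm]
    ring
  · simp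

end Asymptotics

theorem dirichlet_normalizer_laplace_asymptotics_general
    (m : ℕ) (a : ℕ → Fin (m + 1) → ℝ)
    (α : Fin (m + 1) → ℝ) (hαpos : ∀ i, 0 < α i)
    (hlim : ∀ i, Tendsto (fun N : ℕ => a N i / (N : ℝ)) atTop (nhds (α i))) :
    ∃ L : ℝ,
      IsGreatest {r : ℝ | ∃ y : Fin (m + 1) → ℝ,
          (∀ i, 0 < y i) ∧ ∑ i, y i = 1 ∧ r = ∑ i, α i * Real.log (y i)} L ∧
      Tendsto (fun N : ℕ => Real.log (dirichletZ m (a N)) / (N : ℝ)) atTop (nhds L) ∧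
      ((∑ i, α i = 1) → L = ∑ i, α i * Real.log (α i)) := by
  refine ⟨maxWeightedLog α, isGreatest_maxWeightedLog hαpos, ?_,
    fun h => by simp [maxWeightedLog, h]⟩
  have hβ : ∀ i, Tendsto (fun N : ℕ => (a N i - 1) / N) atTop (𝓝 (α i)) := fun i => by
    simpa [sub_div] using (hlim i).sub (tendsto_const_div_atTop_nhds_zero_nat 1)
  have ha : ∀ᶠ N : ℕ in atTop, ∀ i, 1 ≤ a N i := eventually_all.2 fun i =>
    (tendsto_natCast_atTop_atTop.num (hαpos i) (hlim i)).eventually_ge_atTop 1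
  have hS : 0 < ∑ j, α j := Finset.sum_pos (fun i _ => hαpos i) Finset.univ_nonempty
  have hy : ∀ i, 0 < α i / ∑ j, α j := fun i => div_pos (hαpos i) hS
  have hy1 : ∑ i, α i / ∑ j, α j = 1 := by rw [← Finset.sum_div, div_self hS.ne']
  have hupper := (continuousAt_maxWeightedLog (fun i => (hαpos i).ne') hS.ne').tendsto.comp
    (tendsto_pi_nhds.2 hβ)
  refine tendsto_of_tendsto_of_tendsto_of_le_of_le' (tendsto_lowerBound_div_atTop hy hβ) hupper
    ?_ ?_
  · have hεy : ∀ᶠ N : ℕ in atTop, ∀ i : Fin m, (N : ℝ)⁻¹ < α i.castSucc / ∑ j, α j :=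
      eventually_all.2 fun i =>
        tendsto_inv_atTop_nhds_zero_nat.eventually (eventually_lt_nhds (hy i.castSucc))
    filter_upwards [ha, hεy, eventually_gt_atTop 0] with N haN hεN hN
    exact div_le_div_of_nonneg_right (le_log_dirichletZ haN (hy _) hy1.le (by positivity) hεN)
      N.cast_nonneg
  · filter_upwards [ha] with N haN
    simpa [Function.comp_def, maxWeightedLog_div_const] using
      div_le_div_of_nonneg_right (log_dirichletZ_le haN) N.cast_nonneg

/-- If `a_N ∈ (0,∞)ⁿ` (with `n = m+1 ≥ 1`) satisfies `a_N / N → α` with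
all `αᵢ > 0`, then `(1/N) log Z_N` converges to
`max { Σᵢ αᵢ log yᵢ : yᵢ > 0, Σ yᵢ = 1 }`; in particular when `Σ αᵢ = 1` the limit is
`Σᵢ αᵢ log αᵢ`. -/
theorem dirichlet_normalizer_laplace_asymptotics
    (m : ℕ) (a : ℕ → Fin (m + 1) → ℝ) (hapos : ∀ N i, 0 < a N i)
    (α : Fin (m + 1) → ℝ) (hαpos : ∀ i, 0 < α i)
    (hlim : ∀ i, Tendsto (fun N : ℕ => a N i / (N : ℝ)) atTop (nhds (α i))) :
    ∃ L : ℝ,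
      IsGreatest {r : ℝ | ∃ y : Fin (m + 1) → ℝ,
          (∀ i, 0 < y i) ∧ ∑ i, y i = 1 ∧ r = ∑ i, α i * Real.log (y i)} L ∧
      Tendsto (fun N : ℕ => Real.log (dirichletZ m (a N)) / (N : ℝ)) atTop (nhds L) ∧
      ((∑ i, α i = 1) → L = ∑ i, α i * Real.log (α i)) :=
  dirichlet_normalizer_laplace_asymptotics_general m a α hαpos hlim

end
end

section
/- Let f : [0,1] → ℝ be a continuous increasing function and C ≥ 0, and define σ²(x,y) = |f(x) − f(y)| + C. Then the functional P(σ,·) : μ ↦ ∫∫σ²(x,y) dμ(x) dμ(y) is concave on the set of Borel probability measures on [0,1]: for all probability measures μ, ν on [0,1] and all t ∈ [0,1], P(σ, tμ + (1−t)ν) ≥ t·P(σ,μ) + (1−t)·P(σ,ν). -/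
/-!
Write `P(μ, ν) = ∫∫ (|g x - g y| + C) dμ(x) dν(y)`, where `g` is `f` extended constantly
outside `[0, 1]`. Expanding the quadratic form, the concavity defect at `tμ + (1 - t)ν` is
`t (1 - t) (P(μ, ν) + P(ν, μ) - P(μ, μ) - P(ν, ν))`, so it suffices that the kernel is of
negative type. Shift `g` to be nonnegative and use `|a - b| = a + b - 2 min a b`: for probability
measures the linear terms cancel. By the layer cake formula
`∫∫ min (g x) (g y) dμ(x) dν(y) = ∫₀^∞ μ{g > s} ν{g > s} ds`, so the remaining terms are
controlled pointwise in `s` by `2 m n ≤ m² + n²` with `m = μ{g > s}`, `n = ν{g > s}`.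
-/

open MeasureTheory Set
open scoped ENNReal

theorem ENNReal.mul_add_mul_le_mul_self_add_mul_self (a b : ℝ≥0∞) :
    a * b + b * a ≤ a * a + b * b := by
  rcases le_total a b with h | h <;>
  · obtain ⟨c, rfl⟩ := exists_add_of_le h
    exact le_iff_exists_add.mpr ⟨c * c, by ring⟩

section Kernel

variable {α : Type*} [MeasurableSpace α] {μ ν : Measure α}

theorem integral_prod_smul_add_smul {F : α × α → ℝ} (hF : Measurable F) {M : ℝ}
    (hFM : ∀ p, |F p| ≤ M) [IsFiniteMeasure μ] [IsFiniteMeasure ν] {a b : ℝ}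
    (ha : 0 ≤ a) (hb : 0 ≤ b) :
    ∫ p, F p ∂((ENNReal.ofReal a • μ + ENNReal.ofReal b • ν).prod
        (ENNReal.ofReal a • μ + ENNReal.ofReal b • ν)) =
      a ^ 2 * ∫ p, F p ∂(μ.prod μ) + a * b * (∫ p, F p ∂(μ.prod ν) + ∫ p, F p ∂(ν.prod μ)) +
        b ^ 2 * ∫ p, F p ∂(ν.prod ν) := by
  have hint (c : ℝ) (ρ : Measure (α × α)) [IsFiniteMeasure ρ] :
      Integrable F (ENNReal.ofReal c • ρ) :=
    (Integrable.of_bound hF.aestronglyMeasurable M (.of_forall hFM)).smul_measure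
      ENNReal.ofReal_ne_top
  simp only [Measure.prod_add, Measure.add_prod, Measure.prod_smul_left, Measure.prod_smul_right,
    smul_add, smul_smul, ← ENNReal.ofReal_mul ha, ← ENNReal.ofReal_mul hb]
  rw [integral_add_measure ((hint _ _).add_measure (hint _ _)) ((hint _ _).add_measure (hint _ _)),
    integral_add_measure (hint _ _) (hint _ _), integral_add_measure (hint _ _) (hint _ _)]
  simp only [integral_smul_measure, smul_eq_mul]
  rw [ENNReal.toReal_ofReal (by positivity), ENNReal.toReal_ofReal (by positivity),
    ENNReal.toReal_ofReal (by positivity), ENNReal.toReal_ofReal (by positivity)]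
  ring

theorem le_integral_prod_convexComb_of_diag_le {F : α × α → ℝ} (hF : Measurable F) {M : ℝ}
    (hFM : ∀ p, |F p| ≤ M) [IsFiniteMeasure μ] [IsFiniteMeasure ν]
    (hcross : ∫ p, F p ∂(μ.prod μ) + ∫ p, F p ∂(ν.prod ν) ≤
      ∫ p, F p ∂(μ.prod ν) + ∫ p, F p ∂(ν.prod μ))
    {t : ℝ} (ht0 : 0 ≤ t) (ht1 : t ≤ 1) :
    t * ∫ p, F p ∂(μ.prod μ) + (1 - t) * ∫ p, F p ∂(ν.prod ν) ≤
      ∫ p, F p ∂((ENNReal.ofReal t • μ + ENNReal.ofReal (1 - t) • ν).prod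
        (ENNReal.ofReal t • μ + ENNReal.ofReal (1 - t) • ν)) := by
  rw [integral_prod_smul_add_smul hF hFM ht0 (sub_nonneg.2 ht1)]
  nlinarith [mul_nonneg (mul_nonneg ht0 (sub_nonneg.2 ht1)) (sub_nonneg.2 hcross)]

theorem lintegral_prod_min_eq {g : α → ℝ} (hg : Measurable g) (hg0 : 0 ≤ g) [SFinite ν] :
    ∫⁻ p, ENNReal.ofReal (min (g p.1) (g p.2)) ∂(μ.prod ν) =
      ∫⁻ s in Ioi 0, μ {x | s < g x} * ν {x | s < g x} := by
  rw [lintegral_eq_lintegral_meas_lt (f := fun p : α × α => min (g p.1) (g p.2)) _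
    (.of_forall fun p => le_min (hg0 _) (hg0 _))
    ((hg.comp measurable_fst).min (hg.comp measurable_snd)).aemeasurable]
  refine lintegral_congr fun s => ?_
  rw [← Measure.prod_prod]
  congr 1
  ext p
  simp

theorem lintegral_prod_min_cross_le_diag {g : α → ℝ} (hg : Measurable g) (hg0 : 0 ≤ g)
    [SFinite μ] [SFinite ν] :
    ∫⁻ p, ENNReal.ofReal (min (g p.1) (g p.2)) ∂(μ.prod ν) +
        ∫⁻ p, ENNReal.ofReal (min (g p.1) (g p.2)) ∂(ν.prod μ) ≤
      ∫⁻ p, ENNReal.ofReal (min (g p.1) (g p.2)) ∂(μ.prod μ) +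
        ∫⁻ p, ENNReal.ofReal (min (g p.1) (g p.2)) ∂(ν.prod ν) := by
  have hmeas (ρ : Measure α) : Measurable fun s : ℝ => ρ {x | s < g x} :=
    Antitone.measurable fun _ _ hs => measure_mono fun _ hx => lt_of_le_of_lt hs hx
  simp only [lintegral_prod_min_eq hg hg0]
  rw [← lintegral_add_left (f := fun s => μ {x | s < g x} * ν {x | s < g x})
      ((hmeas μ).mul (hmeas ν)),
    ← lintegral_add_left (f := fun s => μ {x | s < g x} * μ {x | s < g x})
      ((hmeas μ).mul (hmeas μ))]
  exact lintegral_mono fun s => ENNReal.mul_add_mul_le_mul_self_add_mul_self _ _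

theorem integral_prod_min_cross_le_diag {g : α → ℝ} (hg : Measurable g) (hg0 : 0 ≤ g) {M : ℝ}
    (hgM : ∀ x, g x ≤ M) [IsFiniteMeasure μ] [IsFiniteMeasure ν] :
    ∫ p, min (g p.1) (g p.2) ∂(μ.prod ν) + ∫ p, min (g p.1) (g p.2) ∂(ν.prod μ) ≤
      ∫ p, min (g p.1) (g p.2) ∂(μ.prod μ) + ∫ p, min (g p.1) (g p.2) ∂(ν.prod ν) := by
  have hmeas : Measurable fun p : α × α => min (g p.1) (g p.2) :=
    (hg.comp measurable_fst).min (hg.comp measurable_snd)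
  have hnn (p : α × α) : 0 ≤ min (g p.1) (g p.2) := le_min (hg0 _) (hg0 _)
  have hfin (ρ : Measure (α × α)) [IsFiniteMeasure ρ] :
      ∫⁻ p, ENNReal.ofReal (min (g p.1) (g p.2)) ∂ρ ≠ ∞ :=
    (Integrable.of_bound hmeas.aestronglyMeasurable M (.of_forall fun p => by
      rw [Real.norm_of_nonneg (hnn p)]; exact (min_le_left _ _).trans (hgM _))).lintegral_lt_top.ne
  simp only [integral_eq_lintegral_of_nonneg_ae (.of_forall hnn) hmeas.aestronglyMeasurable]
  rw [← ENNReal.toReal_add (hfin _) (hfin _), ← ENNReal.toReal_add (hfin _) (hfin _)]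
  exact ENNReal.toReal_mono (ENNReal.add_ne_top.2 ⟨hfin _, hfin _⟩)
    (lintegral_prod_min_cross_le_diag hg hg0)

theorem integral_prod_abs_sub_add_const {g : α → ℝ} (hg : Measurable g) {M : ℝ}
    (hgM : ∀ x, |g x| ≤ M) (C : ℝ) [IsProbabilityMeasure μ] [IsProbabilityMeasure ν] :
    ∫ p, (|g p.1 - g p.2| + C) ∂(μ.prod ν) =
      ∫ x, g x ∂μ + ∫ x, g x ∂ν + C - 2 * ∫ p, min (g p.1) (g p.2) ∂(μ.prod ν) := by
  have hint {F : α × α → ℝ} (hF : Measurable F) (hFM : ∀ p, |F p| ≤ M) :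
      Integrable F (μ.prod ν) :=
    .of_bound hF.aestronglyMeasurable M (.of_forall hFM)
  have hfst : Integrable (fun p : α × α => g p.1) (μ.prod ν) :=
    hint (hg.comp measurable_fst) fun p => hgM p.1
  have hsnd : Integrable (fun p : α × α => g p.2) (μ.prod ν) :=
    hint (hg.comp measurable_snd) fun p => hgM p.2
  have hmin : Integrable (fun p : α × α => min (g p.1) (g p.2)) (μ.prod ν) :=
    hint ((hg.comp measurable_fst).min (hg.comp measurable_snd)) fun p => by
      rcases min_choice (g p.1) (g p.2) with h | h <;> rw [h] <;> apply hgM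
  have habs (p : α × α) :
      |g p.1 - g p.2| + C = g p.1 + g p.2 + C - 2 * min (g p.1) (g p.2) := by
    rw [abs_sub_comm, ← max_sub_min_eq_abs]
    linarith [min_add_max (g p.1) (g p.2)]
  simp only [habs]
  rw [integral_sub ?_ (hmin.const_mul 2), integral_add ?_ (integrable_const C),
    integral_add hfst hsnd, integral_fun_fst, integral_fun_snd, integral_const, integral_const_mul]
  · simp
  · exact hfst.add hsnd
  · exact (hfst.add hsnd).add (integrable_const C)

theorem integral_prod_abs_sub_add_const_diag_le_cross {g : α → ℝ} (hg : Measurable g) {M : ℝ}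
    (hgM : ∀ x, |g x| ≤ M) (C : ℝ) [IsProbabilityMeasure μ] [IsProbabilityMeasure ν] :
    ∫ p, (|g p.1 - g p.2| + C) ∂(μ.prod μ) + ∫ p, (|g p.1 - g p.2| + C) ∂(ν.prod ν) ≤
      ∫ p, (|g p.1 - g p.2| + C) ∂(μ.prod ν) + ∫ p, (|g p.1 - g p.2| + C) ∂(ν.prod μ) := by
  set g' : α → ℝ := fun x => g x + M
  have hg'0 : 0 ≤ g' := fun x => show 0 ≤ g x + M by linarith [neg_abs_le (g x), hgM x]
  have hg'M (x : α) : |g' x| ≤ 2 * M := by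
    rw [abs_of_nonneg (hg'0 x)]
    linarith [le_abs_self (g x), hgM x]
  have hshift (p : α × α) : |g p.1 - g p.2| = |g' p.1 - g' p.2| := by
    simp only [g', add_sub_add_right_eq_sub]
  have hg' : Measurable g' := hg.add_const M
  simp only [hshift, integral_prod_abs_sub_add_const hg' hg'M]
  linarith [integral_prod_min_cross_le_diag (μ := μ) (ν := ν) hg' hg'0
    fun x => (le_abs_self _).trans (hg'M x)]

end Kernel

theorem P_concave_of_increasing_profile_general
    (f : ℝ → ℝ) (hf : ContinuousOn f (Set.Icc (0:ℝ) 1))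
    (C : ℝ)
    (μ ν : Measure ℝ) [IsProbabilityMeasure μ] [IsProbabilityMeasure ν]
    (hμ : μ (Set.Icc (0:ℝ) 1)ᶜ = 0) (hν : ν (Set.Icc (0:ℝ) 1)ᶜ = 0)
    (t : ℝ) (ht0 : 0 ≤ t) (ht1 : t ≤ 1) :
    t * (∫ x, ∫ y, (|f x - f y| + C) ∂μ ∂μ) +
        (1 - t) * (∫ x, ∫ y, (|f x - f y| + C) ∂ν ∂ν) ≤
      ∫ x, ∫ y, (|f x - f y| + C)
          ∂(ENNReal.ofReal t • μ + ENNReal.ofReal (1 - t) • ν)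
        ∂(ENNReal.ofReal t • μ + ENNReal.ofReal (1 - t) • ν) := by
  set g : ℝ → ℝ := IccExtend zero_le_one ((Icc 0 1).domRestrict f)
  have hg : Continuous g := hf.domRestrict.Icc_extend'
  obtain ⟨M, hM⟩ := isCompact_Icc.exists_bound_of_continuousOn hf
  have hgM (x : ℝ) : |g x| ≤ M := hM _ (projIcc 0 1 zero_le_one x).2
  have hK : Measurable fun p : ℝ × ℝ => |g p.1 - g p.2| + C := by fun_prop
  have hKM (p : ℝ × ℝ) : |(|g p.1 - g p.2| + C)| ≤ 2 * M + |C| := by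
    grw [abs_add_le, abs_abs, abs_sub, hgM, hgM]; linarith
  have hiter (ρ : Measure ℝ) [IsFiniteMeasure ρ] (hρ : ρ (Icc 0 1)ᶜ = 0) :
      ∫ x, ∫ y, (|f x - f y| + C) ∂ρ ∂ρ = ∫ p, (|g p.1 - g p.2| + C) ∂(ρ.prod ρ) := by
    have hfg : ∀ᵐ x ∂ρ, g x = f x := measure_mono_null
      (fun x hx h => hx (IccExtend_of_mem _ _ h)) hρ
    rw [integral_prod _ (.of_bound hK.aestronglyMeasurable _ (.of_forall hKM))]
    refine integral_congr_ae (hfg.mono fun x hx => integral_congr_ae (hfg.mono fun y hy => ?_))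
    simp only [hx, hy]
  have := μ.smul_finite (ENNReal.ofReal_ne_top (r := t))
  have := ν.smul_finite (ENNReal.ofReal_ne_top (r := 1 - t))
  rw [hiter μ hμ, hiter ν hν, hiter _ (by simp [hμ, hν])]
  exact le_integral_prod_convexComb_of_diag_le hK hKM
    (integral_prod_abs_sub_add_const_diag_le_cross hg.measurable hgM C) ht0 ht1

/-- For `σ²(x,y) = |f(x) − f(y)| + C` with `f` continuous and increasing
on `[0,1]` and `C ≥ 0`, the functional `P(σ,μ) = ∫∫ σ²(x,y) dμ(x) dμ(y)` is concave on the
set of Borel probability measures on `[0,1]`. -/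
theorem P_concave_of_increasing_profile
    (f : ℝ → ℝ) (hf : ContinuousOn f (Set.Icc (0:ℝ) 1))
    (hmono : MonotoneOn f (Set.Icc (0:ℝ) 1))
    (C : ℝ) (hC : 0 ≤ C)
    (μ ν : Measure ℝ) [IsProbabilityMeasure μ] [IsProbabilityMeasure ν]
    (hμ : μ (Set.Icc (0:ℝ) 1)ᶜ = 0) (hν : ν (Set.Icc (0:ℝ) 1)ᶜ = 0)
    (t : ℝ) (ht0 : 0 ≤ t) (ht1 : t ≤ 1) :
    t * (∫ x, ∫ y, (|f x - f y| + C) ∂μ ∂μ) +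
        (1 - t) * (∫ x, ∫ y, (|f x - f y| + C) ∂ν ∂ν) ≤
      ∫ x, ∫ y, (|f x - f y| + C)
          ∂(ENNReal.ofReal t • μ + ENNReal.ofReal (1 - t) • ν)
        ∂(ENNReal.ofReal t • μ + ENNReal.ofReal (1 - t) • ν) :=
  P_concave_of_increasing_profile_general f hf C μ ν hμ hν t ht0 ht1
end
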